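/- arXiv:1411.0479 — 2 statements merged into one kernel-verified Lean document; each statement's English description precedes it below -/
import Mathlib

section
/- For a strongly convex QP with modulus μ (i.e., H ⪰ μI, μ > 0), any dual feasible y ≥ 0 yields a primal point z(y) = −H^{-1}(D'y + h) satisfying ‖z(y) − z*‖² ≤ (2/μ)(Φ* − Φ(y)), where z* is the primal optimum; hence dual suboptimality controls primal accuracy. -/
/-!
On `z ↦ L(z, y) = ½ zᵀHz + (Dᵀy + h)ᵀz - yᵀd` the point `z(y)` is stationary, so for every `z`
the gap `L(z, y) - Φ(y) = L(z, y) - L(z(y), y)` is exactly `½ (z - z(y))ᵀH(z - z(y))`, which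
strong convexity bounds below by `(μ/2) ‖z - z(y)‖²`. At a feasible `z*` with `y ≥ 0` the
penalty `yᵀ(Dz* - d)` is nonpositive, so `L(z*, y) ≤ V(z*)`.
-/

open Matrix

variable {ι : Type*} [Fintype ι]

theorem Matrix.IsHermitian.dotProduct_mulVec_comm {H : Matrix ι ι ℝ} (hH : H.IsHermitian)
    (a b : ι → ℝ) : a ⬝ᵥ H *ᵥ b = b ⬝ᵥ H *ᵥ a := by
  rw [dotProduct_mulVec, ← mulVec_transpose, ← conjTranspose_eq_transpose_of_trivial, hH.eq,
    dotProduct_comm]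

theorem Matrix.PosDef.of_mul_dotProduct_self_le {H : Matrix ι ι ℝ} (hH : H.IsHermitian)
    {μ : ℝ} (hμ : 0 < μ) (hHμ : ∀ v, μ * (v ⬝ᵥ v) ≤ v ⬝ᵥ H *ᵥ v) : H.PosDef :=
  .of_dotProduct_mulVec_pos hH fun v hv ↦ by
    have hvv : 0 < v ⬝ᵥ v := by simpa using dotProduct_self_star_pos_iff.2 hv
    simpa using (mul_pos hμ hvv).trans_le (hHμ v)

theorem quadratic_sub_quadratic_of_mulVec_eq_neg {H : Matrix ι ι ℝ} (hH : H.IsHermitian)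
    {c z₀ : ι → ℝ} (hz₀ : H *ᵥ z₀ = -c) (z : ι → ℝ) :
    (1 / 2 * (z ⬝ᵥ H *ᵥ z) + c ⬝ᵥ z) - (1 / 2 * (z₀ ⬝ᵥ H *ᵥ z₀) + c ⬝ᵥ z₀) =
      1 / 2 * ((z - z₀) ⬝ᵥ H *ᵥ (z - z₀)) := by
  have hz : z ⬝ᵥ H *ᵥ z₀ = -(c ⬝ᵥ z) := by rw [hz₀, dotProduct_neg, dotProduct_comm]
  have hz₀' : z₀ ⬝ᵥ H *ᵥ z₀ = -(c ⬝ᵥ z₀) := by rw [hz₀, dotProduct_neg, dotProduct_comm]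
  rw [mulVec_sub, dotProduct_sub, sub_dotProduct, sub_dotProduct,
    hH.dotProduct_mulVec_comm z₀ z, hz, hz₀']
  ring

theorem dotProduct_nonpos_of_nonneg_of_nonpos {v w : ι → ℝ} (hv : 0 ≤ v) (hw : w ≤ 0) :
    v ⬝ᵥ w ≤ 0 := by
  simpa using dotProduct_nonneg_of_nonneg hv (neg_nonneg.2 hw)

theorem ciInf_eq_of_forall_le {α : Type*} {f : α → ℝ} {a : α} (h : ∀ x, f a ≤ f x) :
    ⨅ x, f x = f a :=
  have : Nonempty α := ⟨a⟩
  (IsLeast.isGLB ⟨Set.mem_range_self a, Set.forall_mem_range.2 h⟩).ciInf_eq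

theorem dual_suboptimality_controls_primal_accuracy_general (n m : ℕ)
    (H : Matrix (Fin n) (Fin n) ℝ) (hHsym : H.IsHermitian)
    (μ : ℝ) (hμ : 0 < μ)
    (hHμ : ∀ v : Fin n → ℝ, μ * (v ⬝ᵥ v) ≤ v ⬝ᵥ H.mulVec v)
    (h : Fin n → ℝ) (D : Matrix (Fin m) (Fin n) ℝ) (d : Fin m → ℝ)
    (V : (Fin n → ℝ) → ℝ)
    (hV : ∀ z, V z = (1 / 2 : ℝ) * (z ⬝ᵥ H.mulVec z) + h ⬝ᵥ z)
    (Φ : (Fin m → ℝ) → ℝ)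
    (hΦ : ∀ y, Φ y = ⨅ z : Fin n → ℝ, V z + y ⬝ᵥ (D.mulVec z - d))
    (zstar : Fin n → ℝ) (hzstar_feas : D.mulVec zstar ≤ d)
    (y : Fin m → ℝ) (hy : 0 ≤ y) :
    ((-(H⁻¹.mulVec (Dᵀ.mulVec y + h)) - zstar) ⬝ᵥ
        (-(H⁻¹.mulVec (Dᵀ.mulVec y + h)) - zstar)) ≤
      (2 / μ) * (V zstar - Φ y) := by
  set c := Dᵀ *ᵥ y + h
  set zy := -(H⁻¹ *ᵥ c)
  have hPD : H.PosDef := .of_mul_dotProduct_self_le hHsym hμ hHμ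
  have hzy : H *ᵥ zy = -c := by
    rw [mulVec_neg, mulVec_mulVec, mul_nonsing_inv H hPD.det_pos.ne'.isUnit, one_mulVec]
  set L := fun z ↦ V z + y ⬝ᵥ (D *ᵥ z - d)
  have hL_sub : ∀ z, L z - L zy = 1 / 2 * ((z - zy) ⬝ᵥ H *ᵥ (z - zy)) := fun z ↦ by
    rw [← quadratic_sub_quadratic_of_mulVec_eq_neg hHsym hzy]
    simp only [L, c, hV, dotProduct_sub, dotProduct_mulVec y D, ← mulVec_transpose, add_dotProduct]
    ring
  have hΦy : Φ y = L zy := hΦ y ▸ ciInf_eq_of_forall_le fun z ↦ by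
    have hpsd : 0 ≤ (z - zy) ⬝ᵥ H *ᵥ (z - zy) := by
      simpa using hPD.posSemidef.dotProduct_mulVec_nonneg (z - zy)
    show L zy ≤ L z
    linarith [hL_sub z]
  have hLzstar : L zstar ≤ V zstar :=
    add_le_of_nonpos_right (dotProduct_nonpos_of_nonneg_of_nonpos hy (sub_nonpos.2 hzstar_feas))
  calc (zy - zstar) ⬝ᵥ (zy - zstar) = (zstar - zy) ⬝ᵥ (zstar - zy) := by
        rw [← neg_sub zstar, neg_dotProduct, dotProduct_neg, neg_neg]
    _ ≤ 2 / μ * (1 / 2 * ((zstar - zy) ⬝ᵥ H *ᵥ (zstar - zy))) := by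
        rw [div_mul_eq_mul_div, le_div_iff₀ hμ]
        linarith [hHμ (zstar - zy)]
    _ ≤ 2 / μ * (V zstar - Φ y) := by
        gcongr
        linarith [hL_sub zstar, hΦy, hLzstar]

/-- For a strongly convex QP with modulus `μ` (`H ⪰ μI`), any dual feasible
`y ≥ 0` yields the primal point `z(y) = -H⁻¹(D'y + h)` satisfying
`‖z(y) - z*‖² ≤ (2/μ)(Φ* - Φ(y))`, where `z*` is the primal optimum and
`Φ* = V(z*)` by strong duality. -/
theorem dual_suboptimality_controls_primal_accuracy (n m : ℕ)
    (H : Matrix (Fin n) (Fin n) ℝ) (hHsym : H.IsHermitian)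
    (μ : ℝ) (hμ : 0 < μ)
    (hHμ : ∀ v : Fin n → ℝ, μ * (v ⬝ᵥ v) ≤ v ⬝ᵥ H.mulVec v)
    (h : Fin n → ℝ) (D : Matrix (Fin m) (Fin n) ℝ) (d : Fin m → ℝ)
    (V : (Fin n → ℝ) → ℝ)
    (hV : ∀ z, V z = (1 / 2 : ℝ) * (z ⬝ᵥ H.mulVec z) + h ⬝ᵥ z)
    (Φ : (Fin m → ℝ) → ℝ)
    (hΦ : ∀ y, Φ y = ⨅ z : Fin n → ℝ, V z + y ⬝ᵥ (D.mulVec z - d))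
    (zstar : Fin n → ℝ) (hzstar_feas : D.mulVec zstar ≤ d)
    (hzstar_opt : ∀ z, D.mulVec z ≤ d → V zstar ≤ V z)
    (y : Fin m → ℝ) (hy : 0 ≤ y) :
    ((-(H⁻¹.mulVec (Dᵀ.mulVec y + h)) - zstar) ⬝ᵥ
        (-(H⁻¹.mulVec (Dᵀ.mulVec y + h)) - zstar)) ≤
      (2 / μ) * (V zstar - Φ y) :=
  dual_suboptimality_controls_primal_accuracy_general n m H hHsym μ hμ hHμ h D d V hV Φ hΦ zstar
    hzstar_feas y hy
end

section
/- If a vector z ∈ ℝⁿ is (ε_V, ε_g)-optimal for the QP min{V(z) : Dz ≤ d} with V strongly convex with modulus μ and optimal solution z*, then ‖z − z*‖ ≤ sqrt(2(ε_V + ‖y*‖₁ ε_g)/μ), where y* ≥ 0 is any dual optimal multiplier. -/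
/-! The Lagrangian `L(w) = V(w) + y*ᵀ(Dw - d)` is again a quadratic objective with Hessian `H`,
and by complementary slackness and the saddle-point inequality `z*` minimizes it. At a minimizer
of a quadratic objective the first-order term vanishes, so
`L(z) - L(z*) = ½ (z - z*)ᵀH(z - z*) ≥ μ/2 ‖z - z*‖²`, while
`L(z) - L(z*) = V(z) - V(z*) + y*ᵀ(Dz - d) ≤ ε_V + ‖y*‖₁ ε_g`. -/

open Matrix

section QuadraticObjective

variable {ι : Type*} [Fintype ι] (H : Matrix ι ι ℝ) (g : ι → ℝ)

noncomputable def quadraticObjective (w : ι → ℝ) : ℝ := 1 / 2 * (w ⬝ᵥ H *ᵥ w) + g ⬝ᵥ w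

theorem quadraticObjective_add_smul (x s : ι → ℝ) (t : ℝ) :
    quadraticObjective H g (x + t • s) = quadraticObjective H g x
      + t * (1 / 2 * (x ⬝ᵥ H *ᵥ s + s ⬝ᵥ H *ᵥ x) + g ⬝ᵥ s)
      + t ^ 2 * (1 / 2 * (s ⬝ᵥ H *ᵥ s)) := by
  simp only [quadraticObjective, mulVec_add, mulVec_smul, dotProduct_add, add_dotProduct,
    dotProduct_smul, smul_dotProduct, smul_eq_mul]
  ring

theorem quadraticObjective_add_of_forall_le {x : ι → ℝ}
    (hmin : ∀ w, quadraticObjective H g x ≤ quadraticObjective H g w) (s : ι → ℝ) :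
    quadraticObjective H g (x + s) = quadraticObjective H g x + 1 / 2 * (s ⬝ᵥ H *ᵥ s) := by
  obtain ⟨a, ha_def⟩ : ∃ a, a = 1 / 2 * (x ⬝ᵥ H *ᵥ s + s ⬝ᵥ H *ᵥ x) + g ⬝ᵥ s := ⟨_, rfl⟩
  have hnonneg : ∀ t : ℝ, 0 ≤ 1 / 2 * (s ⬝ᵥ H *ᵥ s) * (t * t) + a * t + 0 := fun t => by
    have := hmin (x + t • s)
    rw [quadraticObjective_add_smul, ← ha_def] at this
    linarith
  have ha : a = 0 := by
    have hdisc := discrim_le_zero hnonneg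
    rw [discrim] at hdisc
    nlinarith [sq_nonneg a]
  have hunit := quadraticObjective_add_smul H g x s 1
  rw [← ha_def, ha, one_smul] at hunit
  linarith

theorem quadraticObjective_add_dotProduct_sub {κ : Type*} [Fintype κ] (D : Matrix κ ι ℝ)
    (d y w) : quadraticObjective H g w + y ⬝ᵥ (D *ᵥ w - d)
      = quadraticObjective H (g + y ᵥ* D) w - y ⬝ᵥ d := by
  simp only [quadraticObjective, dotProduct_sub, dotProduct_mulVec, add_dotProduct]
  ring

end QuadraticObjective

section Multipliers

variable {κ : Type*} [Fintype κ] {y v : κ → ℝ}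

theorem dotProduct_eq_zero_of_nonneg_of_nonpos (hy : 0 ≤ y) (hv : v ≤ 0)
    (h : 0 ≤ y ⬝ᵥ v) : y ⬝ᵥ v = 0 :=
  le_antisymm (Finset.sum_nonpos fun i _ => mul_nonpos_of_nonneg_of_nonpos (hy i) (hv i)) h

theorem dotProduct_le_sum_abs_mul {ε : ℝ} (hy : 0 ≤ y) (hv : ∀ i, max (v i) 0 ≤ ε) :
    y ⬝ᵥ v ≤ (∑ i, |y i|) * ε := by
  rw [Finset.sum_mul]
  refine Finset.sum_le_sum fun i _ => ?_
  rw [abs_of_nonneg (hy i)]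
  exact mul_le_mul_of_nonneg_left ((le_max_left _ _).trans (hv i)) (hy i)

end Multipliers

theorem eps_optimal_distance_bound_general (n m : ℕ)
    (H : Matrix (Fin n) (Fin n) ℝ)
    (μ : ℝ) (hμ : 0 < μ)
    (hHμ : ∀ v : Fin n → ℝ, μ * (v ⬝ᵥ v) ≤ v ⬝ᵥ H.mulVec v)
    (h : Fin n → ℝ) (D : Matrix (Fin m) (Fin n) ℝ) (d : Fin m → ℝ)
    (V : (Fin n → ℝ) → ℝ)
    (hV : ∀ z, V z = (1 / 2 : ℝ) * (z ⬝ᵥ H.mulVec z) + h ⬝ᵥ z)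
    (zstar : Fin n → ℝ) (hzstar_feas : D.mulVec zstar ≤ d)
    (ystar : Fin m → ℝ) (hystar_nonneg : 0 ≤ ystar)
    (hsaddle : ∀ w : Fin n → ℝ, V zstar ≤ V w + ystar ⬝ᵥ (D.mulVec w - d))
    (εV εg : ℝ)
    (z : Fin n → ℝ)
    (hsubopt : V z - V zstar ≤ εV)
    (hinfeas : ∀ i, max ((D.mulVec z - d) i) 0 ≤ εg) :
    Real.sqrt ((z - zstar) ⬝ᵥ (z - zstar)) ≤
      Real.sqrt (2 * (εV + (∑ i, |ystar i|) * εg) / μ) := by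
  have hVq : V = quadraticObjective H h := funext hV
  subst hVq
  set L := quadraticObjective H (h + ystar ᵥ* D)
  have hlagr := quadraticObjective_add_dotProduct_sub H h D d ystar
  have hslack : ystar ⬝ᵥ (D *ᵥ zstar - d) = 0 :=
    dotProduct_eq_zero_of_nonneg_of_nonpos hystar_nonneg (sub_nonpos.2 hzstar_feas)
      (by linarith [hsaddle zstar])
  have hmin : ∀ w, L zstar ≤ L w := fun w => by
    linarith [hsaddle w, hlagr w, hlagr zstar]
  have hgrowth := quadraticObjective_add_of_forall_le H _ hmin (z - zstar)
  rw [add_sub_cancel] at hgrowth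
  have hdual := dotProduct_le_sum_abs_mul hystar_nonneg hinfeas
  refine Real.sqrt_le_sqrt ((le_div_iff₀ hμ).2 ?_)
  linarith [hHμ (z - zstar), hlagr z, hlagr zstar]

/-- If `z` is `(ε_V, ε_g)`-optimal for the QP `min {V(z) : Dz ≤ d}` with `V`
strongly convex with modulus `μ` and optimum `z*`, then
`‖z - z*‖ ≤ sqrt(2(ε_V + ‖y*‖₁ ε_g)/μ)` for any dual optimal multiplier
`y* ≥ 0` (characterized by the saddle-point inequality). -/
theorem eps_optimal_distance_bound (n m : ℕ)
    (H : Matrix (Fin n) (Fin n) ℝ) (hHsym : H.IsHermitian)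
    (μ : ℝ) (hμ : 0 < μ)
    (hHμ : ∀ v : Fin n → ℝ, μ * (v ⬝ᵥ v) ≤ v ⬝ᵥ H.mulVec v)
    (h : Fin n → ℝ) (D : Matrix (Fin m) (Fin n) ℝ) (d : Fin m → ℝ)
    (V : (Fin n → ℝ) → ℝ)
    (hV : ∀ z, V z = (1 / 2 : ℝ) * (z ⬝ᵥ H.mulVec z) + h ⬝ᵥ z)
    (zstar : Fin n → ℝ) (hzstar_feas : D.mulVec zstar ≤ d)
    (hzstar_opt : ∀ w, D.mulVec w ≤ d → V zstar ≤ V w)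
    (ystar : Fin m → ℝ) (hystar_nonneg : 0 ≤ ystar)
    (hsaddle : ∀ w : Fin n → ℝ, V zstar ≤ V w + ystar ⬝ᵥ (D.mulVec w - d))
    (εV εg : ℝ) (hεV : 0 ≤ εV) (hεg : 0 ≤ εg)
    (z : Fin n → ℝ)
    (hsubopt : V z - V zstar ≤ εV)
    (hinfeas : ∀ i, max ((D.mulVec z - d) i) 0 ≤ εg) :
    Real.sqrt ((z - zstar) ⬝ᵥ (z - zstar)) ≤
      Real.sqrt (2 * (εV + (∑ i, |ystar i|) * εg) / μ) :=
  eps_optimal_distance_bound_general n m H μ hμ hHμ h D d V hV zstar hzstar_feas ystar hystar_nonneg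
    hsaddle εV εg z hsubopt hinfeas
end
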